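/- The number of pairs (P, μ) where P is a Dyck path of length 2n and μ is a label in {1, ..., h} attached to a chosen peak of P of height h, equals 4^(n-1) for n ≥ 1. Equivalently, the sum over all Dyck paths of length 2n of the sum of the heights of all their peaks equals 4^(n-1). -/

import Mathlib

def IsStepWord (w : List ℤ) : Prop := ∀ s ∈ w, s = 1 ∨ s = -1

/-- partial sum (height) after `i` steps -/
def psum (w : List ℤ) (i : ℕ) : ℤ := (w.take i).sum

def IsDyckPath (w : List ℤ) : Prop :=
  IsStepWord w ∧ (∀ i, 0 ≤ psum w i) ∧ w.sum = 0

def IsBridge (w : List ℤ) : Prop := IsStepWord w ∧ w.sum = 0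

def IsPeak (w : List ℤ) (i : ℕ) : Prop := w[i]? = some 1 ∧ w[i+1]? = some (-1)

/-- height of the apex of the peak at position `i` -/
def peakHeight (w : List ℤ) (i : ℕ) : ℤ := psum w (i+1)

/-- number of crossings of the x-axis -/
def crossings (w : List ℤ) : ℕ :=
  ((Finset.range w.length).filter
    (fun i => psum w (i+1) = 0 ∧ psum w i * psum w (i+2) < 0)).card

/-!
Deleting the marked peak `ud` of a path of semilength `m + 1` leaves a Dyck path of semilength
`m` with a marked point (where the peak was) of height `h - 1`, and the label `μ ∈ [1, h]`
survives. Conversely a peak can be inserted at any of the `2m + 1` points of a Dyck path, so the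
count is `S m = ∑_P ∑_i (h_i(P) + 1)` over Dyck paths `P` of semilength `m`.
With `C` the Catalan numbers, the first-return decomposition `P = u X d Y` gives
`S (m + 1) = 2 ∑_{i+j=m} S i * C j + (m + 2) * C (m + 1)`, and `S m = 4 ^ m` follows from
`2 ∑_{i+j=m} 4 ^ i * C j + centralBinom (m + 1) = 4 ^ (m + 1)`.
-/

open Finset Nat DyckStep

lemma psum_zero (w : List ℤ) : psum w 0 = 0 := rfl

lemma psum_cons_succ (s : ℤ) (w : List ℤ) (i : ℕ) :
    psum (s :: w) (i + 1) = s + psum w i := by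
  simp [psum]

lemma psum_of_length_le {w : List ℤ} {i : ℕ} (h : w.length ≤ i) : psum w i = w.sum := by
  rw [psum, List.take_of_length_le h]

lemma psum_append (a b : List ℤ) (i : ℕ) :
    psum (a ++ b) i = psum a i + psum b (i - a.length) := by
  simp [psum, List.take_append]

lemma psum_append_length (a b : List ℤ) : psum (a ++ b) a.length = a.sum := by
  simp [psum]

lemma isPeak_iff_exists_eq_append {w : List ℤ} {i : ℕ} :
    IsPeak w i ↔ ∃ a b : List ℤ, a.length = i ∧ w = a ++ 1 :: -1 :: b := by
  constructor
  · rintro ⟨h_up, h_down⟩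
    obtain ⟨hi, h1⟩ := List.getElem?_eq_some_iff.1 h_up
    obtain ⟨hi1, h2⟩ := List.getElem?_eq_some_iff.1 h_down
    refine ⟨w.take i, w.drop (i + 2), by rw [List.length_take]; omega, ?_⟩
    conv_lhs => rw [← List.take_append_drop i w]
    rw [List.drop_eq_getElem_cons hi, List.drop_eq_getElem_cons hi1, h1, h2]
  · rintro ⟨a, b, rfl, rfl⟩
    simp [IsPeak]

lemma peakHeight_append_peak (a b : List ℤ) :
    peakHeight (a ++ 1 :: -1 :: b) a.length = a.sum + 1 := by
  rw [peakHeight, psum_append, psum_of_length_le (Nat.le_succ _), Nat.add_sub_cancel_left,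
    psum_cons_succ, psum_zero, add_zero]

lemma isDyckPath_append_peak_iff (a b : List ℤ) :
    IsDyckPath (a ++ 1 :: -1 :: b) ↔ IsDyckPath (a ++ b) := by
  have h_before : ∀ i ≤ a.length, psum (a ++ 1 :: -1 :: b) i = psum (a ++ b) i := by
    intro i hi
    rw [psum_append, psum_append, Nat.sub_eq_zero_of_le hi, psum_zero, psum_zero]
  have h_apex : psum (a ++ 1 :: -1 :: b) (a.length + 1) = psum (a ++ b) a.length + 1 := by
    rw [psum_append_length]
    exact peakHeight_append_peak a b
  have h_after : ∀ j,
      psum (a ++ 1 :: -1 :: b) (a.length + 2 + j) = psum (a ++ b) (a.length + j) := by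
    intro j
    rw [psum_append, psum_append, psum_of_length_le (w := a) (by omega),
      psum_of_length_le (w := a) (by omega), show a.length + 2 + j - a.length = j + 1 + 1 by omega,
      Nat.add_sub_cancel_left, psum_cons_succ, psum_cons_succ]
    ring
  have h_nonneg : (∀ i, 0 ≤ psum (a ++ 1 :: -1 :: b) i) ↔ ∀ i, 0 ≤ psum (a ++ b) i := by
    constructor
    · intro h i
      rcases le_or_gt i a.length with hi | hi
      · exact h_before i hi ▸ h i
      · obtain ⟨j, rfl⟩ := Nat.exists_eq_add_of_le hi.le
        exact h_after j ▸ h _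
    · intro h i
      rcases le_or_gt i a.length with hi | hi
      · exact (h_before i hi).symm ▸ h i
      obtain rfl | hi := eq_or_lt_of_le (Nat.succ_le_of_lt hi)
      · rw [h_apex]
        linarith [h a.length]
      · obtain ⟨j, rfl⟩ := Nat.exists_eq_add_of_le hi
        exact (h_after j).symm ▸ h _
  simp only [IsDyckPath, IsStepWord, h_nonneg]
  simp [or_imp, forall_and]

def succHeightSum (w : List ℤ) : ℤ := ∑ i ∈ range (w.length + 1), (psum w i + 1)

lemma succHeightSum_append (a b : List ℤ) :
    succHeightSum (a ++ b) = succHeightSum a + succHeightSum b + b.length * a.sum - 1 := by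
  have h_left : ∀ i ∈ range (a.length + 1), psum (a ++ b) i + 1 = psum a i + 1 := by
    intro i hi
    rw [psum_append, Nat.sub_eq_zero_of_le (Nat.lt_succ_iff.1 (mem_range.1 hi)), psum_zero,
      add_zero]
  have h_right : ∀ j, psum (a ++ b) (a.length + 1 + j) + 1 = a.sum + (psum b (j + 1) + 1) := by
    intro j
    rw [psum_append, psum_of_length_le (by omega),
      show a.length + 1 + j - a.length = j + 1 by omega]
    ring
  rw [succHeightSum, List.length_append, add_right_comm, sum_range_add, sum_congr rfl h_left,
    sum_congr rfl fun j _ => h_right j, succHeightSum, succHeightSum,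
    sum_range_succ' _ b.length]
  simp only [sum_add_distrib, sum_const, card_range, nsmul_eq_mul, psum_zero]
  ring

def DyckStep.toInt : DyckStep → ℤ
  | U => 1
  | D => -1

lemma sum_map_toInt (l : List DyckStep) :
    (l.map DyckStep.toInt).sum = l.count U - l.count D := by
  induction l with
  | nil => simp
  | cons s l ih =>
    cases s <;> simp only [List.map_cons, List.sum_cons, List.count_cons_self,
      List.count_cons_of_ne (by decide : U ≠ D), List.count_cons_of_ne (by decide : D ≠ U),
      DyckStep.toInt, ih] <;> push_cast <;> ring

lemma exists_map_toInt_eq {w : List ℤ} (hw : IsStepWord w) :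
    ∃ l : List DyckStep, l.map DyckStep.toInt = w := by
  induction w with
  | nil => exact ⟨[], rfl⟩
  | cons s w ih =>
    obtain ⟨l, hl⟩ := ih fun t ht => hw t (List.mem_cons_of_mem s ht)
    rcases hw s List.mem_cons_self with rfl | rfl
    · exact ⟨U :: l, by rw [List.map_cons, hl]; rfl⟩
    · exact ⟨D :: l, by rw [List.map_cons, hl]; rfl⟩

namespace DyckWord

def toInts (p : DyckWord) : List ℤ := p.toList.map DyckStep.toInt

lemma toInts_injective : Function.Injective toInts := fun _ _ h =>
  DyckWord.ext <| List.map_injective_iff.2 (by intro s t; cases s <;> cases t <;> decide) h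

lemma length_toInts (p : DyckWord) : p.toInts.length = 2 * p.semilength := by
  simp [toInts]

lemma psum_toInts (p : DyckWord) (i : ℕ) :
    psum p.toInts i = (p.toList.take i).count U - (p.toList.take i).count D := by
  rw [psum, toInts, ← List.map_take, sum_map_toInt]

lemma sum_toInts (p : DyckWord) : p.toInts.sum = 0 := by
  rw [toInts, sum_map_toInt, p.count_U_eq_count_D, sub_self]

lemma isDyckPath_toInts (p : DyckWord) : IsDyckPath p.toInts := by
  refine ⟨?_, fun i => ?_, p.sum_toInts⟩
  · intro s hs
    obtain ⟨t, -, rfl⟩ := List.mem_map.1 hs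
    cases t
    exacts [Or.inl rfl, Or.inr rfl]
  · rw [psum_toInts, sub_nonneg]
    exact_mod_cast p.count_D_le_count_U i

lemma exists_toInts_eq {w : List ℤ} (hw : IsDyckPath w) : ∃ p : DyckWord, p.toInts = w := by
  obtain ⟨l, rfl⟩ := exists_map_toInt_eq hw.1
  refine ⟨⟨l, ?_, fun i => ?_⟩, rfl⟩
  · have := hw.2.2
    rw [sum_map_toInt, sub_eq_zero] at this
    exact_mod_cast this
  · have := hw.2.1 i
    rw [psum, ← List.map_take, sum_map_toInt, sub_nonneg] at this
    exact_mod_cast this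

lemma toInts_nest_add (x y : DyckWord) :
    (x.nest + y).toInts = [1] ++ x.toInts ++ [-1] ++ y.toInts := by
  change ([U] ++ x.toList ++ [D] ++ y.toList).map DyckStep.toInt = _
  simp only [List.map_append, toInts]
  rfl

lemma succHeightSum_toInts_nest_add (x y : DyckWord) :
    succHeightSum (x.nest + y).toInts =
      succHeightSum x.toInts + succHeightSum y.toInts + 2 * x.semilength + 2 := by
  have h_up : succHeightSum [1] = 3 := by simp [succHeightSum, sum_range_succ, psum]
  have h_down : succHeightSum [-1] = 1 := by simp [succHeightSum, sum_range_succ, psum]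
  rw [toInts_nest_add, succHeightSum_append, succHeightSum_append, succHeightSum_append, h_up,
    h_down]
  simp only [List.sum_append, sum_toInts, length_toInts, List.sum_singleton,
    List.length_singleton]
  push_cast
  ring

def ofSemilength (m : ℕ) : Finset DyckWord :=
  univ.map (Function.Embedding.subtype fun p : DyckWord => p.semilength = m)

@[simp] lemma mem_ofSemilength {p : DyckWord} {m : ℕ} :
    p ∈ ofSemilength m ↔ p.semilength = m := by
  simp [ofSemilength]

lemma card_ofSemilength (m : ℕ) : #(ofSemilength m) = catalan m := by
  simp [ofSemilength, card_dyckWord_semilength_eq_catalan]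

lemma sum_ofSemilength_succ {M : Type*} [AddCommMonoid M] (m : ℕ) (G : DyckWord → M) :
    ∑ p ∈ ofSemilength (m + 1), G p =
      ∑ ij ∈ antidiagonal m, ∑ x ∈ ofSemilength ij.1, ∑ y ∈ ofSemilength ij.2, G (x.nest + y) := by
  have h_sigma : ∑ q ∈ (antidiagonal m).sigma fun ij => ofSemilength ij.1 ×ˢ ofSemilength ij.2,
      G (q.2.1.nest + q.2.2) =
      ∑ ij ∈ antidiagonal m, ∑ x ∈ ofSemilength ij.1, ∑ y ∈ ofSemilength ij.2, G (x.nest + y) := by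
    rw [sum_sigma]
    exact sum_congr rfl fun ij _ => sum_product _ _ _
  have h_ne_zero : ∀ p ∈ ofSemilength (m + 1), p ≠ 0 := by
    rintro p hp rfl
    simp at hp
  rw [← h_sigma]
  refine sum_nbij' (fun p => ⟨(p.insidePart.semilength, p.outsidePart.semilength),
      p.insidePart, p.outsidePart⟩) (fun q => q.2.1.nest + q.2.2) ?_ ?_ ?_ ?_ ?_
  · intro p hp
    have := semilength_insidePart_add_semilength_outsidePart_add_one (h_ne_zero p hp)
    simp only [mem_ofSemilength, mem_sigma, HasAntidiagonal.mem_antidiagonal, mem_product,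
      and_true] at hp ⊢
    omega
  · rintro ⟨⟨i, j⟩, x, y⟩ h
    simp only [mem_sigma, HasAntidiagonal.mem_antidiagonal, mem_product, mem_ofSemilength,
      semilength_add, semilength_nest] at h ⊢
    omega
  · exact fun p hp => nest_insidePart_add_outsidePart (h_ne_zero p hp)
  · rintro ⟨⟨i, j⟩, x, y⟩ h
    simp only [mem_sigma, HasAntidiagonal.mem_antidiagonal, mem_product, mem_ofSemilength] at h
    obtain ⟨-, rfl, rfl⟩ := h
    simp
  · exact fun p hp => by rw [nest_insidePart_add_outsidePart (h_ne_zero p hp)]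

end DyckWord

lemma centralBinom_succ_add_two_mul_catalan (n : ℕ) :
    centralBinom (n + 1) + 2 * catalan n = 4 * centralBinom n := by
  apply Nat.eq_of_mul_eq_mul_left (show 0 < n + 1 by omega)
  rw [mul_add, succ_mul_centralBinom_succ, mul_left_comm, succ_mul_catalan_eq_centralBinom]
  ring

lemma sum_antidiagonal_two_mul_succ_mul_catalan_mul_catalan (m : ℕ) :
    ∑ ij ∈ antidiagonal m, (2 * ij.1 + 2) * (catalan ij.1 * catalan ij.2) =
      centralBinom (m + 1) := by
  have h_swap : ∑ ij ∈ antidiagonal m, (2 * ij.1 + 2) * (catalan ij.1 * catalan ij.2) =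
      ∑ ij ∈ antidiagonal m, (2 * ij.2 + 2) * (catalan ij.1 * catalan ij.2) := by
    rw [← sum_antidiagonal_swap]
    exact sum_congr rfl fun _ _ => by rw [Prod.fst_swap, Prod.snd_swap, mul_comm (catalan _)]
  have h_double : 2 * ∑ ij ∈ antidiagonal m, (2 * ij.1 + 2) * (catalan ij.1 * catalan ij.2) =
      2 * centralBinom (m + 1) := by
    rw [two_mul]
    nth_rewrite 2 [h_swap]
    rw [← sum_add_distrib, ← succ_mul_catalan_eq_centralBinom, catalan_succ', mul_sum, mul_sum]
    refine sum_congr rfl fun ij hij => ?_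
    rw [← mem_antidiagonal.1 hij]
    ring
  omega

lemma two_mul_sum_antidiagonal_four_pow_mul_catalan_add_centralBinom (m : ℕ) :
    2 * ∑ ij ∈ antidiagonal m, 4 ^ ij.1 * catalan ij.2 + centralBinom (m + 1) = 4 ^ (m + 1) := by
  induction m with
  | zero => simp [centralBinom_eq_two_mul_choose]
  | succ m ih =>
    have h_shift : ∑ ij ∈ antidiagonal m, 4 ^ (ij.1 + 1) * catalan ij.2 =
        4 * ∑ ij ∈ antidiagonal m, 4 ^ ij.1 * catalan ij.2 := by
      rw [mul_sum]
      exact sum_congr rfl fun _ _ => by ring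
    have h := centralBinom_succ_add_two_mul_catalan (m + 1)
    rw [sum_antidiagonal_succ, h_shift, pow_succ 4 (m + 1), ← ih, pow_zero, one_mul]
    linarith

namespace DyckWord

lemma sum_succHeightSum_ofSemilength_succ (m : ℕ) :
    ∑ p ∈ ofSemilength (m + 1), succHeightSum p.toInts =
      ∑ ij ∈ antidiagonal m,
        ((∑ x ∈ ofSemilength ij.1, succHeightSum x.toInts) * catalan ij.2 +
          catalan ij.1 * ∑ y ∈ ofSemilength ij.2, succHeightSum y.toInts +
          ((2 * ij.1 + 2) * (catalan ij.1 * catalan ij.2) : ℕ)) := by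
  rw [sum_ofSemilength_succ]
  refine sum_congr rfl fun ij _ => ?_
  have h : ∀ x ∈ ofSemilength ij.1, ∀ y : DyckWord, succHeightSum (x.nest + y).toInts =
      succHeightSum x.toInts + succHeightSum y.toInts + (2 * ij.1 + 2) := by
    intro x hx y
    rw [succHeightSum_toInts_nest_add, mem_ofSemilength.1 hx]
    ring
  rw [sum_congr rfl fun x hx => sum_congr rfl fun y _ => h x hx y]
  simp only [sum_add_distrib, sum_const, card_ofSemilength, nsmul_eq_mul, ← mul_sum]
  push_cast
  ring

lemma sum_succHeightSum_ofSemilength (m : ℕ) :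
    ∑ p ∈ ofSemilength m, succHeightSum p.toInts = 4 ^ m := by
  induction m using Nat.strong_induction_on with
  | _ m ih =>
  cases m with
  | zero =>
    have h : ∀ p ∈ ofSemilength 0, p.toInts = [] := fun p hp =>
      List.eq_nil_of_length_eq_zero (by rw [length_toInts, mem_ofSemilength.1 hp])
    rw [sum_congr rfl fun p hp => by rw [h p hp]]
    simp [succHeightSum, card_ofSemilength, psum_zero]
  | succ m =>
    have h_ih : ∀ ij ∈ antidiagonal m,
        ((∑ x ∈ ofSemilength ij.1, succHeightSum x.toInts) * catalan ij.2 +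
          catalan ij.1 * ∑ y ∈ ofSemilength ij.2, succHeightSum y.toInts +
          ((2 * ij.1 + 2) * (catalan ij.1 * catalan ij.2) : ℕ)) =
        (4 : ℤ) ^ ij.1 * catalan ij.2 + catalan ij.1 * 4 ^ ij.2 +
          ((2 * ij.1 + 2) * (catalan ij.1 * catalan ij.2) : ℕ) := by
      intro ij hij
      have := mem_antidiagonal.1 hij
      rw [ih ij.1 (by omega), ih ij.2 (by omega)]
    have h_swap : ∑ ij ∈ antidiagonal m, (catalan ij.1 : ℤ) * 4 ^ ij.2 =
        ∑ ij ∈ antidiagonal m, (4 : ℤ) ^ ij.1 * catalan ij.2 := by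
      rw [← sum_antidiagonal_swap]
      exact sum_congr rfl fun _ _ => mul_comm _ _
    rw [sum_succHeightSum_ofSemilength_succ, sum_congr rfl h_ih, sum_add_distrib, sum_add_distrib,
      h_swap, ← Nat.cast_sum, sum_antidiagonal_two_mul_succ_mul_catalan_mul_catalan, ← two_mul]
    exact_mod_cast two_mul_sum_antidiagonal_four_pow_mul_catalan_add_centralBinom m

end DyckWord

open DyckWord

def labeledPoints (m : ℕ) : Finset (Σ _ : DyckWord, Σ _ : ℕ, ℕ) :=
  (ofSemilength m).sigma fun p =>
    (range (2 * m + 1)).sigma fun i => Icc 1 (psum p.toInts i + 1).toNat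

def insertPeak (x : Σ _ : DyckWord, Σ _ : ℕ, ℕ) : List ℤ × ℕ × ℕ :=
  (x.1.toInts.take x.2.1 ++ 1 :: -1 :: x.1.toInts.drop x.2.1, x.2.1, x.2.2)

def labeledPeaks (n : ℕ) : Set (List ℤ × ℕ × ℕ) :=
  {t | IsDyckPath t.1 ∧ t.1.length = 2 * n ∧ IsPeak t.1 t.2.1 ∧
    1 ≤ t.2.2 ∧ (t.2.2 : ℤ) ≤ peakHeight t.1 t.2.1}

lemma card_labeledPoints (m : ℕ) : #(labeledPoints m) = 4 ^ m := by
  have h : ∀ p ∈ ofSemilength m,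
      ((∑ i ∈ range (2 * m + 1), (psum p.toInts i + 1).toNat : ℕ) : ℤ) =
        succHeightSum p.toInts := by
    intro p hp
    rw [succHeightSum, length_toInts, mem_ofSemilength.1 hp]
    push_cast
    exact sum_congr rfl fun i _ =>
      Int.toNat_of_nonneg (by linarith [p.isDyckPath_toInts.2.1 i])
  have := sum_succHeightSum_ofSemilength m
  rw [← sum_congr rfl h, ← Nat.cast_sum] at this
  simp only [labeledPoints, card_sigma, Nat.card_Icc, Nat.add_sub_cancel]
  exact_mod_cast this

lemma injOn_insertPeak (m : ℕ) : Set.InjOn insertPeak (labeledPoints m) := by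
  rintro ⟨p, i, μ⟩ hp ⟨q, j, ν⟩ hq h
  simp only [insertPeak, Prod.mk.injEq] at h
  obtain ⟨h, rfl, rfl⟩ := h
  simp only [labeledPoints, coe_sigma, Set.mem_sigma_iff, mem_coe, mem_ofSemilength] at hp hq
  have h_len : (p.toInts.take i).length = (q.toInts.take i).length := by
    rw [List.length_take, List.length_take, length_toInts, length_toInts, hp.1, hq.1]
  obtain ⟨h_take, h_drop⟩ := List.append_inj h h_len
  obtain rfl : p = q := toInts_injective <| by
    rw [← List.take_append_drop i p.toInts, ← List.take_append_drop i q.toInts, h_take,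
      (List.cons_injective.comp List.cons_injective) h_drop]
  rfl

lemma insertPeak_mem_labeledPeaks {m : ℕ} {x : Σ _ : DyckWord, Σ _ : ℕ, ℕ}
    (hx : x ∈ labeledPoints m) : insertPeak x ∈ labeledPeaks (m + 1) := by
  obtain ⟨p, i, μ⟩ := x
  simp only [labeledPoints, mem_sigma, mem_ofSemilength, mem_range, mem_Icc] at hx
  obtain ⟨h_sl, hi, hμ1, hμ2⟩ := hx
  have h_len : (p.toInts.take i).length = i := by
    rw [List.length_take, length_toInts, h_sl]
    omega
  have h_height := peakHeight_append_peak (p.toInts.take i) (p.toInts.drop i)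
  rw [h_len] at h_height
  have h_nonneg := p.isDyckPath_toInts.2.1 i
  simp only [insertPeak, labeledPeaks, Set.mem_ofPred_eq]
  refine ⟨(isDyckPath_append_peak_iff _ _).2 ?_, ?_,
    isPeak_iff_exists_eq_append.2 ⟨_, _, h_len, rfl⟩, hμ1, ?_⟩
  · rw [List.take_append_drop]
    exact p.isDyckPath_toInts
  · rw [List.length_append, List.length_cons, List.length_cons, List.length_drop, h_len,
      length_toInts, h_sl]
    omega
  · rw [h_height]
    unfold psum at hμ2 h_nonneg
    omega

lemma labeledPeaks_succ_subset_image (m : ℕ) :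
    labeledPeaks (m + 1) ⊆ insertPeak '' labeledPoints m := by
  rintro ⟨w, i, μ⟩ ⟨hw, h_len, h_peak, hμ1, hμ2⟩
  dsimp only at hw h_len h_peak hμ1 hμ2
  obtain ⟨a, b, rfl, rfl⟩ := isPeak_iff_exists_eq_append.1 h_peak
  rw [isDyckPath_append_peak_iff] at hw
  obtain ⟨p, hp⟩ := exists_toInts_eq hw
  have h_lengths := congrArg List.length hp
  simp only [length_toInts, List.length_append, List.length_cons] at h_lengths h_len
  have h_sl : p.semilength = m := by omega
  have h_i : a.length < 2 * m + 1 := by omega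
  have h_label : μ ≤ (psum p.toInts a.length + 1).toNat := by
    rw [peakHeight_append_peak] at hμ2
    rw [hp, psum_append_length]
    omega
  refine ⟨⟨p, a.length, μ⟩, ?_, by simp [insertPeak, hp]⟩
  simp only [labeledPoints, coe_sigma, Set.mem_sigma_iff, mem_coe, mem_ofSemilength, mem_range,
    mem_Icc]
  exact ⟨h_sl, h_i, hμ1, h_label⟩

theorem heightLabeledPeaks_card (n : ℕ) (hn : 1 ≤ n) :
    Nat.card {t : List ℤ × ℕ × ℕ //
        IsDyckPath t.1 ∧ t.1.length = 2 * n ∧ IsPeak t.1 t.2.1 ∧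
          1 ≤ t.2.2 ∧ (t.2.2 : ℤ) ≤ peakHeight t.1 t.2.1} =
      4 ^ (n - 1) := by
  obtain ⟨m, rfl⟩ := Nat.exists_eq_add_of_le' hn
  change Nat.card (labeledPeaks (m + 1)) = _
  have h_image : labeledPeaks (m + 1) = insertPeak '' labeledPoints m :=
    (labeledPeaks_succ_subset_image m).antisymm <|
      Set.image_subset_iff.2 fun _ hx => insertPeak_mem_labeledPeaks hx
  rw [Nat.card_coe_set_eq, h_image, (injOn_insertPeak m).ncard_image, Set.ncard_coe_finset,
    card_labeledPoints, Nat.add_sub_cancel]
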